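/- Let A be a finitary abelian category over a finite field, and let (E₁,E₂) be an orthogonal exceptional pair associated to an exceptional object E (i.e., F_{E₁E₂}^Z = 1 if Z ≅ E or Z ≅ E₁⊕E₂ and 0 otherwise, and F_{E₂E₁}^Z = 1 if Z ≅ E₁⊕E₂ and 0 otherwise). Then for any objects X, X′: F_{X′E}^X = Σ_{[Z₁]} F_{X′E₁}^{Z₁} F_{Z₁E₂}^X − Σ_{[Z₂]} F_{X′E₂}^{Z₂} F_{Z₂E₁}^X. -/

import Mathlib

open CategoryTheory CategoryTheory.Limits
open Classical

/-- The Hall number `F_{AB}^M`: the number of subobjects `X ⊆ M` with `X ≅ B` and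
`M/X ≅ A`. -/
noncomputable def hallNumber {C : Type*} [Category C] [Abelian C] (A B M : C) : ℕ :=
  Nat.card {X : Subobject M // Nonempty ((X : C) ≅ B) ∧ Nonempty (cokernel X.arrow ≅ A)}

/-!
Counting flags `Y ≤ Y' ≤ X` with `Y ≅ B`, `Y'/Y ≅ C'` and `X/Y' ≅ X'` once by the class of
`X/Y` and once by the class of `Y'` gives the associativity
`∑_Z F_{X'C'}^Z F_{ZB}^X = ∑_M F_{X'M}^X F_{C'B}^M`.
For `(C', B) = (E₁, E₂)` the factor `F_{E₁E₂}^M` picks out `M ≅ E` and `M ≅ E₁ ⊕ E₂`, for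
`(C', B) = (E₂, E₁)` only `M ≅ E₁ ⊕ E₂`, so the difference of the two sums is `F_{X'E}^X`.
-/

namespace CategoryTheory.Subobject

variable {C : Type*} [Category C]

lemma mk_arrow_comp_hom_comp_inv {M M' : C} (e : M ≅ M') (Y : Subobject M) :
    mk ((mk (Y.arrow ≫ e.hom)).arrow ≫ e.inv) = Y :=
  (mk_eq_mk_of_comm _ _ (underlyingIso (Y.arrow ≫ e.hom)) (by
    rw [← underlyingIso_hom_comp_eq_mk, Category.assoc, Category.assoc,
      e.hom_inv_id, Category.comp_id])).trans (mk_arrow Y)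

lemma ofLE_mk_comp_arrow {X : C} (Y' : Subobject X) (Y₀ : Subobject (Y' : C))
    (h : mk (Y₀.arrow ≫ Y'.arrow) ≤ Y') :
    ofLE _ _ h = (underlyingIso (Y₀.arrow ≫ Y'.arrow)).hom ≫ Y₀.arrow := by
  rw [← cancel_mono Y'.arrow, ofLE_arrow, Category.assoc, underlyingIso_hom_comp_eq_mk]

lemma mk_ofLE_mk_comp_arrow {X : C} (Y' : Subobject X) (Y₀ : Subobject (Y' : C))
    (h : mk (Y₀.arrow ≫ Y'.arrow) ≤ Y') :
    mk (ofLE _ _ h) = Y₀ :=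
  (mk_eq_mk_of_comm _ _ (underlyingIso _) (ofLE_mk_comp_arrow Y' Y₀ h).symm).trans (mk_arrow Y₀)

lemma mk_arrow_mk_ofLE_comp_arrow {X : C} (Y Y' : Subobject X) (h : Y ≤ Y') :
    mk ((mk (ofLE Y Y' h)).arrow ≫ Y'.arrow) = Y :=
  (mk_eq_mk_of_comm _ _ (underlyingIso _) (by
    rw [← ofLE_arrow h, ← Category.assoc, underlyingIso_hom_comp_eq_mk])).trans (mk_arrow Y)

lemma factors_of_epi_comp [Abelian C] {P K Q : C} (e : P ⟶ K) [Epi e] {t : K ⟶ Q}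
    (S : Subobject Q) (h : S.Factors (e ≫ t)) : S.Factors t := by
  have := strongEpi_of_epi e
  have sq : CommSq (S.factorThru _ h) e S.arrow t := ⟨by simp⟩
  rw [← sq.fac_right]
  exact factors_comp_arrow _

end CategoryTheory.Subobject

namespace CategoryTheory

lemma nonempty_fromSkeleton_obj_iso_iff {C : Type*} [Category C] {Z : Skeleton C} {A : C} :
    Nonempty ((fromSkeleton C).obj Z ≅ A) ↔ Z = toSkeleton A :=
  ⟨fun ⟨i⟩ => (toSkeleton_eq_iff.mpr ⟨i.symm⟩).symm, fun h => h ▸ ⟨fromSkeletonToSkeletonIso A⟩⟩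

end CategoryTheory

lemma finsum_mul_natCard_fiber {R α β : Type*} [Semiring R] [Finite α] (k : α → β)
    (F : β → R) : ∑ᶠ b, F b * Nat.card {a // k a = b} = ∑ᶠ a, F (k a) := by
  have := Fintype.ofFinite α
  have hsupp : (Function.support fun b => F b * Nat.card {a // k a = b}) ⊆
      ↑(Finset.univ.image k) := by
    intro b hb
    by_contra hk
    have : IsEmpty {a // k a = b} := ⟨fun a => hk (by simp [← a.2])⟩
    simp at hb
  rw [finsum_eq_sum_of_support_subset _ hsupp, finsum_eq_sum_of_fintype, Finset.sum_comp]
  refine Finset.sum_congr rfl fun b _ => ?_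
  rw [nsmul_eq_mul, ← Nat.cast_comm, Nat.card_eq_fintype_card, Fintype.card_subtype]

lemma natCast_card_sigma {R α : Type*} [Semiring R] [Finite α] {β : α → Type*}
    [∀ a, Finite (β a)] : (Nat.card (Σ a, β a) : R) = ∑ᶠ a, (Nat.card (β a) : R) := by
  have := Fintype.ofFinite α
  rw [Nat.card_sigma, Nat.cast_sum, finsum_eq_sum_of_fintype]

lemma finsum_mul_ite {α R : Type*} [Semiring R] (f : α → R) (p : α → Prop) [DecidablePred p] :
    ∑ᶠ a, f a * (if p a then 1 else 0) = ∑ᶠ a ∈ {a | p a}, f a := by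
  rw [finsum_mem_def]
  exact finsum_congr fun a => by simp [Set.indicator_apply]

namespace CategoryTheory.Abelian

variable {C : Type*} [Category C] [Abelian C]

noncomputable def cokernelKernelιIsoOfEpi {X Z : C} (f : X ⟶ Z) [Epi f] :
    cokernel (kernel.ι f) ≅ Z :=
  IsColimit.coconePointUniqueUpToIso (colimit.isColimit _)
    (epiIsCokernelOfKernel _ (kernelIsKernel f))

noncomputable def cokernelMkArrowIso {A X : C} (g : A ⟶ X) [Mono g] :
    cokernel (Subobject.mk g).arrow ≅ cokernel g :=
  (cokernelEpiComp (Subobject.underlyingIso g).inv (Subobject.mk g).arrow).symm ≪≫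
    cokernelIsoOfEq (Subobject.underlyingIso_arrow g)

noncomputable def cokernelArrowIsoOfEq {X : C} {P Q : Subobject X} (h : P = Q) :
    cokernel P.arrow ≅ cokernel Q.arrow :=
  eqToIso (congrArg (fun S : Subobject X => cokernel S.arrow) h)

noncomputable def cokernelKernelSubobjectArrowIsoOfEpi {X Z : C} (f : X ⟶ Z) [Epi f] :
    cokernel (kernelSubobject f).arrow ≅ Z :=
  cokernelMkArrowIso (kernel.ι f) ≪≫ cokernelKernelιIsoOfEpi f

lemma kernelSubobject_cokernel_π {A X : C} (i : A ⟶ X) [Mono i] :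
    kernelSubobject (cokernel.π i) = Subobject.mk i := by
  refine le_antisymm ?_ (le_kernelSubobject _ _ ?_)
  · exact Subobject.le_mk_of_comm
      (monoLift i (kernelSubobject (cokernel.π i)).arrow (kernelSubobject_arrow_comp _))
      (monoLift_comp _ _ _)
  · rw [← Subobject.underlyingIso_hom_comp_eq_mk i, Category.assoc, cokernel.condition,
      comp_zero]

@[simp]
lemma kernelSubobject_cokernel_π_arrow {X : C} (W : Subobject X) :
    kernelSubobject (cokernel.π W.arrow) = W := by
  rw [kernelSubobject_cokernel_π, Subobject.mk_arrow]

/-- `kernelSubobject (q ≫ cokernel.π W.arrow)` is the preimage of `W` under `q`. -/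
lemma imageSubobject_kernelSubobject_comp_cokernel_π {X Q : C} (q : X ⟶ Q) [Epi q]
    (W : Subobject Q) :
    imageSubobject ((kernelSubobject (q ≫ cokernel.π W.arrow)).arrow ≫ q) = W := by
  refine le_antisymm (imageSubobject_le _ (W.factorThru _ ?_) (W.factorThru_arrow _ _)) ?_
  · simpa using kernelSubobject_factors (cokernel.π W.arrow) _
      (by rw [Category.assoc, kernelSubobject_arrow_comp])
  · have hcond : pullback.fst q W.arrow ≫ q ≫ cokernel.π W.arrow = 0 := by
      rw [← Category.assoc, pullback.condition, Category.assoc, cokernel.condition, comp_zero]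
    have key : (imageSubobject ((kernelSubobject (q ≫ cokernel.π W.arrow)).arrow ≫ q)).Factors
        (pullback.snd q W.arrow ≫ W.arrow) := by
      rw [← pullback.condition, ← factorThruKernelSubobject_comp_arrow _ _ hcond,
        Category.assoc]
      exact imageSubobject_factors_comp_self _ _
    exact Subobject.le_of_factors (Subobject.factors_of_epi_comp _ _ key)

lemma kernelSubobject_comp_cokernel_π_eq {X Q : C} (q : X ⟶ Q) [Epi q]
    (Y' : Subobject X) (hq : kernelSubobject q ≤ Y') (W : Subobject Q)
    (e : (Y' : C) ⟶ (W : C)) [Epi e] (he : e ≫ W.arrow = Y'.arrow ≫ q) :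
    kernelSubobject (q ≫ cokernel.π W.arrow) = Y' := by
  refine le_antisymm ?_ (le_kernelSubobject _ _ ?_)
  · set K := kernelSubobject (q ≫ cokernel.π W.arrow)
    have hWfac : W.Factors (K.arrow ≫ q) := by
      simpa using kernelSubobject_factors (cokernel.π W.arrow) _
        (by rw [Category.assoc]; exact kernelSubobject_arrow_comp _)
    set v := W.factorThru _ hWfac
    -- An element of `K` and a preimage in `Y'` of its image in `W` differ by an element of
    -- `ker q ⊆ Y'`.
    have hdiff : (pullback.snd e v ≫ K.arrow - pullback.fst e v ≫ Y'.arrow) ≫ q = 0 := by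
      rw [Preadditive.sub_comp, Category.assoc, Category.assoc, ← he, ← W.factorThru_arrow _ hWfac,
        ← Category.assoc, ← Category.assoc, pullback.condition, sub_self]
    have hfac : Y'.Factors (pullback.snd e v ≫ K.arrow) := by
      simpa using Subobject.factors_add _ _
        (Subobject.factors_of_le _ hq (kernelSubobject_factors _ _ hdiff))
        (Subobject.factors_comp_arrow (pullback.fst e v))
    exact Subobject.le_of_factors (Subobject.factors_of_epi_comp _ _ hfac)
  · rw [← Category.assoc, ← he, Category.assoc, cokernel.condition, comp_zero]

lemma kernelSubobject_comp_cokernel_π_imageSubobject {X Q : C} (q : X ⟶ Q) [Epi q]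
    (Y' : Subobject X) (hq : kernelSubobject q ≤ Y') :
    kernelSubobject (q ≫ cokernel.π (imageSubobject (Y'.arrow ≫ q)).arrow) = Y' :=
  kernelSubobject_comp_cokernel_π_eq q Y' hq _ _ (imageSubobject_arrow_comp _)

/-- The second isomorphism theorem: `Y'/Y ≅ W` for an epi `Y' ⟶ W` lying over an epi with
kernel `Y`. -/
noncomputable def cokernelOfLEIsoOfEpi {X Q : C} (q : X ⟶ Q) (Y Y' : Subobject X)
    (hle : Y ≤ Y') (hYq : kernelSubobject q = Y) (W : Subobject Q)
    (e : (Y' : C) ⟶ (W : C)) [Epi e] (he : e ≫ W.arrow = Y'.arrow ≫ q) :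
    cokernel (Subobject.ofLE Y Y' hle) ≅ (W : C) :=
  have hker : kernelSubobject e = Subobject.mk (Subobject.ofLE Y Y' hle) := by
    refine le_antisymm ?_ (le_kernelSubobject _ _ ?_)
    · have hYfac : Y.Factors ((kernelSubobject e).arrow ≫ Y'.arrow) := by
        rw [← hYq]
        exact kernelSubobject_factors q _ (by
          rw [Category.assoc, ← he, ← Category.assoc, kernelSubobject_arrow_comp, zero_comp])
      refine Subobject.le_mk_of_comm (Y.factorThru _ hYfac) ?_
      rw [← cancel_mono Y'.arrow, Category.assoc, Subobject.ofLE_arrow,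
        Subobject.factorThru_arrow]
    · have h : Subobject.ofLE Y Y' hle ≫ e = 0 := by
        rw [← cancel_mono W.arrow, Category.assoc, he, ← Category.assoc,
          Subobject.ofLE_arrow, zero_comp, ← hYq, kernelSubobject_arrow_comp]
      rw [← Subobject.underlyingIso_hom_comp_eq_mk, Category.assoc, h, comp_zero]
  (cokernelMkArrowIso _).symm ≪≫ cokernelArrowIsoOfEq hker.symm ≪≫
    cokernelKernelSubobjectArrowIsoOfEpi e

noncomputable def cokernelOfLEIsoImageSubobject {X : C} (Y Y' : Subobject X) (hle : Y ≤ Y') :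
    cokernel (Subobject.ofLE Y Y' hle) ≅
      ((imageSubobject (Y'.arrow ≫ cokernel.π Y.arrow)) : C) :=
  cokernelOfLEIsoOfEpi (cokernel.π Y.arrow) Y Y' hle (kernelSubobject_cokernel_π_arrow Y) _
    (factorThruImageSubobject _) (imageSubobject_arrow_comp _)

end CategoryTheory.Abelian

section HallNumbers

variable {C : Type*} [Category C] [Abelian C]

abbrev HallSubobject (A B M : C) : Type _ :=
  {Y : Subobject M // Nonempty ((Y : C) ≅ B) ∧ Nonempty (cokernel Y.arrow ≅ A)}

lemma hallNumber_eq_natCard (A B M : C) : hallNumber A B M = Nat.card (HallSubobject A B M) :=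
  rfl

section Finite

variable [∀ X Y : C, Finite (X ⟶ Y)]

instance finite_subobject_nonempty_iso (B M : C) :
    Finite {Y : Subobject M // Nonempty ((Y : C) ≅ B)} := by
  refine Finite.of_surjective
    (fun g : {g : B ⟶ M // Mono g} =>
      have := g.2
      (⟨Subobject.mk g.1, ⟨Subobject.underlyingIso g.1⟩⟩ :
        {Y : Subobject M // Nonempty ((Y : C) ≅ B)})) ?_
  rintro ⟨Y, ⟨e⟩⟩
  exact ⟨⟨e.inv ≫ Y.arrow, mono_comp _ _⟩, Subtype.ext
    ((Subobject.mk_eq_mk_of_comm _ _ e.symm rfl).trans (Subobject.mk_arrow Y))⟩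

instance finite_subobject_nonempty_cokernel_iso (A M : C) :
    Finite {Y : Subobject M // Nonempty (cokernel Y.arrow ≅ A)} := by
  refine Finite.of_surjective
    (fun f : {f : M ⟶ A // Epi f} =>
      have := f.2
      (⟨kernelSubobject f.1, ⟨Abelian.cokernelKernelSubobjectArrowIsoOfEpi f.1⟩⟩ :
        {Y : Subobject M // Nonempty (cokernel Y.arrow ≅ A)})) ?_
  rintro ⟨Y, ⟨e⟩⟩
  exact ⟨⟨cokernel.π Y.arrow ≫ e.hom, epi_comp _ _⟩, Subtype.ext
    ((kernelSubobject_comp_mono _ _).trans (Abelian.kernelSubobject_cokernel_π_arrow Y))⟩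

instance finite_hallSubobject (A B M : C) : Finite (HallSubobject A B M) :=
  Finite.of_injective (fun Y : HallSubobject A B M =>
      (⟨Y.1, Y.2.1⟩ : {Y : Subobject M // Nonempty ((Y : C) ≅ B)}))
    fun _ _ h => Subtype.ext (Subtype.mk.inj h)

end Finite

noncomputable def HallSubobject.map {M M' : C} (e : M ≅ M') (A B : C) (Y : HallSubobject A B M) :
    HallSubobject A B M' :=
  ⟨Subobject.mk (Y.1.arrow ≫ e.hom),
    Y.2.1.map fun i => Subobject.underlyingIso _ ≪≫ i,
    Y.2.2.map fun i => Abelian.cokernelMkArrowIso _ ≪≫ cokernelCompIsIso _ e.hom ≪≫ i⟩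

noncomputable def HallSubobject.equivOfIso {M M' : C} (e : M ≅ M') (A B : C) :
    HallSubobject A B M ≃ HallSubobject A B M' where
  toFun := HallSubobject.map e A B
  invFun := HallSubobject.map e.symm A B
  left_inv Y := Subtype.ext (Subobject.mk_arrow_comp_hom_comp_inv e Y.1)
  right_inv Y := Subtype.ext (Subobject.mk_arrow_comp_hom_comp_inv e.symm Y.1)

lemma hallNumber_congr_right {A B M M' : C} (e : M ≅ M') :
    hallNumber A B M = hallNumber A B M' :=
  Nat.card_congr (HallSubobject.equivOfIso e A B)

lemma hallNumber_congr_middle {A B B' M : C} (e : B ≅ B') :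
    hallNumber A B M = hallNumber A B' M :=
  Nat.card_congr <| Equiv.subtypeEquivRight fun _ =>
    and_congr_left' ⟨fun ⟨i⟩ => ⟨i ≪≫ e⟩, fun ⟨i⟩ => ⟨i ≪≫ e.symm⟩⟩

lemma hallNumber_fromSkeleton_obj_left (B X : C) (Z : Skeleton C) :
    hallNumber ((fromSkeleton C).obj Z) B X =
      Nat.card {Y : {Y : Subobject X // Nonempty ((Y : C) ≅ B)} //
        toSkeleton (cokernel Y.1.arrow) = Z} :=
  Nat.card_congr <| (Equiv.subtypeEquivRight fun _ => and_congr_right' toSkeleton_eq_iff.symm).trans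
    (Equiv.subtypeSubtypeEquivSubtypeInter _ _).symm

lemma hallNumber_fromSkeleton_obj_middle (A X : C) (Z : Skeleton C) :
    hallNumber A ((fromSkeleton C).obj Z) X =
      Nat.card {Y : {Y : Subobject X // Nonempty (cokernel Y.arrow ≅ A)} //
        toSkeleton (Y.1 : C) = Z} :=
  Nat.card_congr <| (Equiv.subtypeEquivRight fun _ =>
      and_comm.trans (and_congr_right' toSkeleton_eq_iff.symm)).trans
    (Equiv.subtypeSubtypeEquivSubtypeInter _ _).symm

abbrev HallFlag (A C' B X : C) : Type _ :=
  {p : Subobject X × Subobject X // ∃ h : p.1 ≤ p.2, Nonempty ((p.1 : C) ≅ B) ∧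
    Nonempty (cokernel (Subobject.ofLE p.1 p.2 h) ≅ C') ∧ Nonempty (cokernel p.2.arrow ≅ A)}

open Abelian in
noncomputable def HallFlag.equivSigmaCokernel (A C' B X : C) :
    HallFlag A C' B X ≃ Σ Y : {Y : Subobject X // Nonempty ((Y : C) ≅ B)},
      HallSubobject A C' (cokernel Y.1.arrow) where
  toFun := fun ⟨⟨Y, Y'⟩, hp⟩ =>
    ⟨⟨Y, hp.choose_spec.1⟩,
      ⟨imageSubobject (Y'.arrow ≫ cokernel.π Y.arrow),
        hp.choose_spec.2.1.map fun i => (cokernelOfLEIsoImageSubobject Y Y' hp.choose).symm ≪≫ i,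
        hp.choose_spec.2.2.map fun i =>
          (cokernelKernelSubobjectArrowIsoOfEpi _).symm ≪≫
            cokernelArrowIsoOfEq (kernelSubobject_comp_cokernel_π_imageSubobject _ Y'
              (by rw [kernelSubobject_cokernel_π_arrow]; exact hp.choose)) ≪≫ i⟩⟩
  invFun := fun ⟨⟨Y, hB⟩, ⟨W, hW⟩⟩ =>
    ⟨(Y, kernelSubobject (cokernel.π Y.arrow ≫ cokernel.π W.arrow)),
      le_kernelSubobject _ _ (by rw [← Category.assoc, cokernel.condition, zero_comp]),
      hB,
      hW.1.map fun i => cokernelOfLEIsoImageSubobject Y _ _ ≪≫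
        Subobject.isoOfEq _ _ (imageSubobject_kernelSubobject_comp_cokernel_π _ W) ≪≫ i,
      hW.2.map fun i => cokernelKernelSubobjectArrowIsoOfEpi _ ≪≫ i⟩
  left_inv := fun ⟨⟨Y, Y'⟩, hp⟩ => Subtype.ext <| Prod.ext rfl <|
    kernelSubobject_comp_cokernel_π_imageSubobject _ Y'
      (by rw [kernelSubobject_cokernel_π_arrow]; exact hp.choose)
  right_inv := fun ⟨⟨_, _⟩, ⟨W, _⟩⟩ => Sigma.ext rfl <| heq_of_eq <| Subtype.ext <|
    imageSubobject_kernelSubobject_comp_cokernel_π _ W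

open Abelian in
noncomputable def HallFlag.equivSigmaSubobject (A C' B X : C) :
    HallFlag A C' B X ≃ Σ Y' : {Y' : Subobject X // Nonempty (cokernel Y'.arrow ≅ A)},
      HallSubobject C' B (Y'.1 : C) where
  toFun := fun ⟨⟨Y, Y'⟩, hp⟩ =>
    ⟨⟨Y', hp.choose_spec.2.2⟩,
      ⟨Subobject.mk (Subobject.ofLE Y Y' hp.choose),
        hp.choose_spec.1.map fun i => Subobject.underlyingIso _ ≪≫ i,
        hp.choose_spec.2.1.map fun i => cokernelMkArrowIso _ ≪≫ i⟩⟩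
  invFun := fun ⟨⟨Y', hA⟩, ⟨Y₀, hY₀⟩⟩ =>
    ⟨(Subobject.mk (Y₀.arrow ≫ Y'.arrow), Y'),
      Subobject.mk_le_of_comm Y₀.arrow rfl,
      hY₀.1.map fun i => Subobject.underlyingIso _ ≪≫ i,
      hY₀.2.map fun i => cokernelIsoOfEq (Subobject.ofLE_mk_comp_arrow Y' Y₀ _) ≪≫
        cokernelEpiComp _ _ ≪≫ i,
      hA⟩
  left_inv := fun ⟨⟨Y, Y'⟩, hp⟩ => Subtype.ext <| Prod.ext
    (Subobject.mk_arrow_mk_ofLE_comp_arrow Y Y' hp.choose) rfl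
  right_inv := fun ⟨⟨Y', _⟩, ⟨Y₀, _⟩⟩ => Sigma.ext rfl <| heq_of_eq <| Subtype.ext <|
    Subobject.mk_ofLE_mk_comp_arrow Y' Y₀ _

section Associativity

variable [∀ X Y : C, Finite (X ⟶ Y)] {R : Type*} [Semiring R]

lemma finsum_hallNumber_mul_hallNumber_eq_natCard_sigma_cokernel (X X' B C' : C) :
    ∑ᶠ Z : Skeleton C,
        (hallNumber X' C' ((fromSkeleton C).obj Z) : R) * hallNumber ((fromSkeleton C).obj Z) B X =
      Nat.card (Σ Y : {Y : Subobject X // Nonempty ((Y : C) ≅ B)},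
        HallSubobject X' C' (cokernel Y.1.arrow)) := by
  simp_rw [hallNumber_fromSkeleton_obj_left,
    finsum_mul_natCard_fiber (fun Y : {Y : Subobject X // Nonempty ((Y : C) ≅ B)} =>
      toSkeleton (cokernel Y.1.arrow)) (fun Z => (hallNumber X' C' ((fromSkeleton C).obj Z) : R)),
    hallNumber_congr_right (fromSkeletonToSkeletonIso _), natCast_card_sigma, hallNumber_eq_natCard]

lemma finsum_hallNumber_mul_hallNumber_eq_natCard_sigma_subobject (X X' B C' : C) :
    ∑ᶠ M : Skeleton C,
        (hallNumber X' ((fromSkeleton C).obj M) X : R) * hallNumber C' B ((fromSkeleton C).obj M) =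
      Nat.card (Σ Y' : {Y' : Subobject X // Nonempty (cokernel Y'.arrow ≅ X')},
        HallSubobject C' B (Y'.1 : C)) := by
  simp_rw [hallNumber_fromSkeleton_obj_middle]
  rw [finsum_congr fun _ => Nat.cast_comm _ _,
    finsum_mul_natCard_fiber (fun Y' : {Y' : Subobject X // Nonempty (cokernel Y'.arrow ≅ X')} =>
      toSkeleton (Y'.1 : C)) (fun M => (hallNumber C' B ((fromSkeleton C).obj M) : R))]
  simp_rw [hallNumber_congr_right (fromSkeletonToSkeletonIso _), natCast_card_sigma,
    hallNumber_eq_natCard]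

theorem hallNumber_assoc (X X' B C' : C) :
    ∑ᶠ Z : Skeleton C,
        (hallNumber X' C' ((fromSkeleton C).obj Z) : R) * hallNumber ((fromSkeleton C).obj Z) B X =
      ∑ᶠ M : Skeleton C,
        (hallNumber X' ((fromSkeleton C).obj M) X : R) *
          hallNumber C' B ((fromSkeleton C).obj M) := by
  rw [finsum_hallNumber_mul_hallNumber_eq_natCard_sigma_cokernel,
    finsum_hallNumber_mul_hallNumber_eq_natCard_sigma_subobject,
    ← Nat.card_congr (HallFlag.equivSigmaCokernel X' C' B X),
    ← Nat.card_congr (HallFlag.equivSigmaSubobject X' C' B X)]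

end Associativity

end HallNumbers

/-- Let `(E₁, E₂)` be an orthogonal exceptional pair associated to an exceptional object `E`,
i.e. `F_{E₁E₂}^Z = 1` if `Z ≅ E` or `Z ≅ E₁ ⊕ E₂` and `0` otherwise, and `F_{E₂E₁}^Z = 1` if
`Z ≅ E₁ ⊕ E₂` and `0` otherwise.  Then for any objects `X, X'`:
`F_{X'E}^X = Σ_{[Z₁]} F_{X'E₁}^{Z₁} F_{Z₁E₂}^X − Σ_{[Z₂]} F_{X'E₂}^{Z₂} F_{Z₂E₁}^X`. -/
theorem hallNumber_orthogonal_pair_recursion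
    (C : Type*) [Category C] [Abelian C]
    [∀ X Y : C, Finite (X ⟶ Y)]
    (E₁ E₂ E : C)
    (hE : ¬ Nonempty (E ≅ E₁ ⊞ E₂))
    (h₁₂ : ∀ Z : C, hallNumber E₁ E₂ Z =
      if Nonempty (Z ≅ E) ∨ Nonempty (Z ≅ E₁ ⊞ E₂) then 1 else 0)
    (h₂₁ : ∀ Z : C, hallNumber E₂ E₁ Z = if Nonempty (Z ≅ E₁ ⊞ E₂) then 1 else 0)
    (X X' : C) :
    (hallNumber X' E X : ℤ) =
      (∑ᶠ Z₁ : Skeleton C,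
        (hallNumber X' E₁ ((fromSkeleton C).obj Z₁) : ℤ) *
          hallNumber ((fromSkeleton C).obj Z₁) E₂ X) -
      (∑ᶠ Z₂ : Skeleton C,
        (hallNumber X' E₂ ((fromSkeleton C).obj Z₂) : ℤ) *
          hallNumber ((fromSkeleton C).obj Z₂) E₁ X) := by
  have hne : toSkeleton E ≠ toSkeleton (E₁ ⊞ E₂) :=
    fun h => hE (toSkeleton_eq_toSkeleton_iff.mp h)
  simp only [hallNumber_assoc, h₁₂, h₂₁, nonempty_fromSkeleton_obj_iso_iff, Nat.cast_ite,
    Nat.cast_one, Nat.cast_zero]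
  rw [finsum_mul_ite, finsum_mul_ite, Set.ofPred_or, Set.ofPred_eq_eq_singleton,
    Set.ofPred_eq_eq_singleton, Set.singleton_union, finsum_mem_pair hne, finsum_mem_singleton,
    hallNumber_congr_middle (fromSkeletonToSkeletonIso E)]
  ring
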